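/- arXiv:2204.06104 — 2 statements merged into one kernel-verified Lean document; each statement's English description precedes it below -/
import Mathlib

section
/- If F : [0,T] → Matrix n n ℝ is differentiable with F(0) = 0 and F'(t) commutes with F(t) for all t, then ∫₀ᵗ F'(τ) F(τ)^{k-1} dτ = F(t)ᵏ / k for every k ≥ 1. -/
/-!
Because `F'(t)` commutes with `F(t)`, every term of the noncommutative power rule
`(F^k)' = ∑ F^(k-1-i) F' F^i` equals `F' F^(k-1)`, so `F^k / k` is a primitive of
`F' F^(k-1)` and the fundamental theorem of calculus applies.
-/

attribute [local instance] Matrix.linftyOpNormedRing Matrix.linftyOpNormedAlgebra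

section CommutingDerivative

variable {𝕜 𝔸 : Type*} [NontriviallyNormedField 𝕜] [NormedRing 𝔸] [NormedAlgebra 𝕜 𝔸]
  {f : 𝕜 → 𝔸} {f' : 𝔸} {x : 𝕜}

theorem HasDerivAt.fun_pow_of_commute (h : HasDerivAt f f' x) (hc : Commute f' (f x))
    (n : ℕ) : HasDerivAt (fun y ↦ f y ^ n) (n • (f' * f x ^ (n - 1))) x := by
  convert h.fun_pow' n using 1
  have hterm : ∀ i ∈ Finset.range n, f x ^ (n.pred - i) * f' * f x ^ i = f' * f x ^ (n - 1) := by
    intro i hi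
    rw [(hc.symm.pow_left _).eq, mul_assoc, ← pow_add, Nat.pred_eq_sub_one,
      Nat.sub_add_cancel (Nat.le_sub_one_of_lt (Finset.mem_range.1 hi))]
  rw [Finset.sum_congr rfl hterm, Finset.sum_const, Finset.card_range]

end CommutingDerivative

theorem intervalIntegral.integral_deriv_mul_pow_of_commute {𝔸 : Type*} [NormedRing 𝔸]
    [NormedAlgebra ℝ 𝔸] [CompleteSpace 𝔸] {f f' : ℝ → 𝔸} {a b : ℝ}
    (hf : ∀ t ∈ Set.uIcc a b, HasDerivAt f (f' t) t) (hf' : ContinuousOn f' (Set.uIcc a b))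
    (hc : ∀ t ∈ Set.uIcc a b, Commute (f' t) (f t)) {k : ℕ} (hk : k ≠ 0) :
    ∫ t in a..b, f' t * f t ^ (k - 1) = (k : ℝ)⁻¹ • (f b ^ k - f a ^ k) := by
  have hfc : ContinuousOn f (Set.uIcc a b) := fun t ht ↦ (hf t ht).continuousAt.continuousWithinAt
  have hprim : ∀ t ∈ Set.uIcc a b,
      HasDerivAt (fun s ↦ (k : ℝ)⁻¹ • f s ^ k) (f' t * f t ^ (k - 1)) t := by
    intro t ht
    have := ((hf t ht).fun_pow_of_commute (hc t ht) k).const_smul (k : ℝ)⁻¹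
    rwa [← Nat.cast_smul_eq_nsmul ℝ, smul_smul, inv_mul_cancel₀ (by exact_mod_cast hk),
      one_smul] at this
  rw [integral_eq_sub_of_hasDerivAt hprim ((hf'.mul (hfc.pow _)).intervalIntegrable), smul_sub]

theorem integral_deriv_mul_pow_general {n : ℕ} (T : ℝ)
    (F F' : ℝ → Matrix (Fin n) (Fin n) ℝ)
    (hF' : Continuous F') (hderiv : ∀ t, HasDerivAt F (F' t) t)
    (hF0 : F 0 = 0)
    (hcomm : ∀ t ∈ Set.Icc (0:ℝ) T, F' t * F t = F t * F' t) :
    ∀ k : ℕ, 1 ≤ k → ∀ t ∈ Set.Icc (0:ℝ) T,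
      (∫ τ in (0:ℝ)..t, F' τ * (F τ) ^ (k - 1)) = ((k : ℝ)⁻¹) • (F t) ^ k := by
  intro k hk t ⟨ht0, htT⟩
  have hsub : Set.uIcc 0 t ⊆ Set.Icc 0 T := by
    rw [Set.uIcc_of_le ht0]
    exact Set.Icc_subset_Icc_right htT
  rw [intervalIntegral.integral_deriv_mul_pow_of_commute (fun s _ ↦ hderiv s)
    hF'.continuousOn (fun s hs ↦ hcomm s (hsub hs)) (by omega), hF0,
    zero_pow (by omega), sub_zero]

/-- If `F(0) = 0` and `F'(t)` commutes with `F(t)`, then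
`∫₀ᵗ F'(τ) F(τ)^(k-1) dτ = F(t)ᵏ / k` for every `k ≥ 1`. -/
theorem integral_deriv_mul_pow {n : ℕ} (T : ℝ) (hT : 0 < T)
    (F F' : ℝ → Matrix (Fin n) (Fin n) ℝ)
    (hF' : Continuous F') (hderiv : ∀ t, HasDerivAt F (F' t) t)
    (hF0 : F 0 = 0)
    (hcomm : ∀ t ∈ Set.Icc (0:ℝ) T, F' t * F t = F t * F' t) :
    ∀ k : ℕ, 1 ≤ k → ∀ t ∈ Set.Icc (0:ℝ) T,
      (∫ τ in (0:ℝ)..t, F' τ * (F τ) ^ (k - 1)) = ((k : ℝ)⁻¹) • (F t) ^ k :=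
  integral_deriv_mul_pow_general T F F' hF' hderiv hF0 hcomm
end

section
/- The sum Φ(t,τ) = ∑_{k=0}^∞ Φ_k(t,τ) of the Peano-Baker series satisfies ∂/∂t Φ(t,τ) = A(t) Φ(t,τ) and Φ(τ,τ) = I. -/
/-!
On `[a, b]` the terms satisfy `‖Φₖ(t,τ)‖ ≤ (M |t - τ|)ᵏ / k!` with `M` a bound for `‖A‖`, so the
series converges uniformly. Its sum is therefore continuous and, integrating termwise, solves
`Φ(t,τ) = I + ∫_τ^t A(s) Φ(s,τ) ds`; the fundamental theorem of calculus on `[a, b]` gives the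
derivative. At `t = τ` every term but `Φ₀ = I` is an integral over a degenerate interval.
-/

attribute [local instance] Matrix.linftyOpNormedRing Matrix.linftyOpNormedAlgebra

/-- The terms of the Peano-Baker series: `Φ₀(t,τ) = I`,
`Φ_{k+1}(t,τ) = ∫_τ^t A(s) Φ_k(s,τ) ds`. -/
noncomputable def peanoBaker {n : ℕ} (A : ℝ → Matrix (Fin n) (Fin n) ℝ) :
    ℕ → ℝ → ℝ → Matrix (Fin n) (Fin n) ℝ
  | 0 => fun _ _ => 1
  | k + 1 => fun t τ => ∫ s in τ..t, A s * peanoBaker A k s τ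

open MeasureTheory Set intervalIntegral
open scoped Nat Interval

theorem hasDerivWithinAt_integral_Icc {E : Type*} [NormedAddCommGroup E] [NormedSpace ℝ E]
    [CompleteSpace E] {f : ℝ → E} {a b τ t : ℝ} (hf : ContinuousOn f (Icc a b))
    (hτ : τ ∈ Icc a b) (ht : t ∈ Icc a b) :
    HasDerivWithinAt (fun u => ∫ s in τ..u, f s) (f t) (Icc a b) t :=
  have : Fact (t ∈ Icc a b) := ⟨ht⟩ -- selects the `FTCFilter` instance for `𝓝[Icc a b] t`
  integral_hasDerivWithinAt_right ((hf.mono (uIcc_subset_Icc hτ ht)).intervalIntegrable)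
    (hf.stronglyMeasurableAtFilter_nhdsWithin measurableSet_Icc t) (hf t ht)

theorem integral_abs_pow_of_nonneg (k : ℕ) {x : ℝ} (hx : 0 ≤ x) :
    ∫ u in (0 : ℝ)..x, |u| ^ k = x ^ (k + 1) / (k + 1) := by
  have habs : EqOn (|·| ^ k) (· ^ k) (uIcc 0 x) := fun u hu => by
    rw [uIcc_of_le hx] at hu
    simp only [abs_of_nonneg hu.1]
  rw [integral_congr habs, integral_pow]
  simp

theorem abs_integral_abs_pow (k : ℕ) (x : ℝ) :
    |∫ u in (0 : ℝ)..x, |u| ^ k| = |x| ^ (k + 1) / (k + 1) := by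
  rcases le_total 0 x with hx | hx
  · rw [integral_abs_pow_of_nonneg k hx, abs_of_nonneg hx, abs_of_nonneg (by positivity)]
  · have hreflect : ∫ u in (0 : ℝ)..x, |u| ^ k = -∫ u in (0 : ℝ)..-x, |u| ^ k := by
      simpa [abs_neg, integral_symm (-x)] using integral_comp_neg (a := 0) (b := x) (|·| ^ k)
    rw [hreflect, abs_neg, integral_abs_pow_of_nonneg k (neg_nonneg.2 hx), abs_of_nonpos hx,
      abs_of_nonneg (by have := neg_nonneg.2 hx; positivity)]

theorem abs_integral_abs_sub_pow (k : ℕ) (τ t : ℝ) :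
    |∫ s in τ..t, |s - τ| ^ k| = |t - τ| ^ (k + 1) / (k + 1) := by
  rw [integral_comp_sub_right (|·| ^ k), sub_self, abs_integral_abs_pow]

theorem Matrix.linfty_opNorm_one_le {m α : Type*} [Fintype m] [DecidableEq m] [NormedRing α]
    [NormOneClass α] : ‖(1 : Matrix m m α)‖ ≤ 1 := by
  rw [← Matrix.diagonal_one, Matrix.linfty_opNorm_diagonal]
  exact pi_norm_le_iff_of_nonneg zero_le_one |>.2 fun _ => by simp

noncomputable def peanoBakerSum {n : ℕ} (A : ℝ → Matrix (Fin n) (Fin n) ℝ) (t τ : ℝ) :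
    Matrix (Fin n) (Fin n) ℝ :=
  ∑' k, peanoBaker A k t τ

namespace peanoBaker

variable {n : ℕ} {A : ℝ → Matrix (Fin n) (Fin n) ℝ} {a b τ M : ℝ}

theorem continuousOn (hA : ContinuousOn A (Icc a b)) (hτ : τ ∈ Icc a b) :
    ∀ k, ContinuousOn (fun t => peanoBaker A k t τ) (Icc a b)
  | 0 => continuousOn_const
  | k + 1 => fun _ ht =>
    (hasDerivWithinAt_integral_Icc (hA.mul (continuousOn hA hτ k)) hτ ht).continuousWithinAt

theorem norm_le (hM : ∀ s ∈ Icc a b, ‖A s‖ ≤ M) (hτ : τ ∈ Icc a b) :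
    ∀ k, ∀ t ∈ Icc a b, ‖peanoBaker A k t τ‖ ≤ (M * |t - τ|) ^ k / k !
  | 0, _, _ => by simpa [peanoBaker] using Matrix.linfty_opNorm_one_le
  | k + 1, t, ht => by
    have hM0 : 0 ≤ M := (norm_nonneg _).trans (hM τ hτ)
    have hterm : ∀ᵐ s ∂volume.restrict (Ι τ t),
        ‖A s * peanoBaker A k s τ‖ ≤ M ^ (k + 1) / k ! * |s - τ| ^ k := by
      refine (ae_restrict_iff' measurableSet_uIoc).2 (ae_of_all _ fun s hs => ?_)
      have hs : s ∈ Icc a b := uIcc_subset_Icc hτ ht (uIoc_subset_uIcc hs)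
      calc ‖A s * peanoBaker A k s τ‖ ≤ ‖A s‖ * ‖peanoBaker A k s τ‖ := norm_mul_le _ _
        _ ≤ M * ((M * |s - τ|) ^ k / k !) := by gcongr; exacts [hM s hs, norm_le hM hτ k s hs]
        _ = M ^ (k + 1) / k ! * |s - τ| ^ k := by ring
    calc ‖peanoBaker A (k + 1) t τ‖
        ≤ |∫ s in τ..t, M ^ (k + 1) / k ! * |s - τ| ^ k| :=
          norm_integral_le_abs_of_norm_le hterm (Continuous.intervalIntegrable (by fun_prop) _ _)
      _ = (M * |t - τ|) ^ (k + 1) / (k + 1)! := by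
          rw [intervalIntegral.integral_const_mul, abs_mul, abs_integral_abs_sub_pow,
            abs_of_nonneg (by positivity), Nat.factorial_succ]
          push_cast
          field_simp
          ring

theorem exists_summable_bound (hA : ContinuousOn A (Icc a b)) (hτ : τ ∈ Icc a b) :
    ∃ c : ℕ → ℝ, Summable c ∧ ∀ k, ∀ t ∈ Icc a b, ‖peanoBaker A k t τ‖ ≤ c k := by
  obtain ⟨M, hM⟩ := isCompact_Icc.exists_bound_of_continuousOn hA
  have hM0 : 0 ≤ M := (norm_nonneg _).trans (hM τ hτ)
  refine ⟨fun k => (M * (b - a)) ^ k / k !, Real.summable_pow_div_factorial _,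
    fun k t ht => (norm_le hM hτ k t ht).trans ?_⟩
  have : |t - τ| ≤ b - a := abs_sub_le_iff.2 ⟨by linarith [ht.2, hτ.1], by linarith [ht.1, hτ.2]⟩
  dsimp only
  gcongr

end peanoBaker

namespace peanoBakerSum

variable {n : ℕ} {A : ℝ → Matrix (Fin n) (Fin n) ℝ} {a b τ : ℝ}

theorem self_eq_one (A : ℝ → Matrix (Fin n) (Fin n) ℝ) (τ : ℝ) : peanoBakerSum A τ τ = 1 :=
  (tsum_eq_single 0 fun
    | 0, h => absurd rfl h
    | _ + 1, _ => integral_same).trans rfl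

theorem continuousOn (hA : ContinuousOn A (Icc a b)) (hτ : τ ∈ Icc a b) :
    ContinuousOn (fun t => peanoBakerSum A t τ) (Icc a b) :=
  let ⟨_, hc, hbound⟩ := peanoBaker.exists_summable_bound hA hτ
  continuousOn_tsum (peanoBaker.continuousOn hA hτ) hc hbound

theorem eq_one_add_integral (hA : ContinuousOn A (Icc a b)) (hτ : τ ∈ Icc a b) {t : ℝ}
    (ht : t ∈ Icc a b) :
    peanoBakerSum A t τ = 1 + ∫ s in τ..t, A s * peanoBakerSum A s τ := by
  obtain ⟨c, hc, hbound⟩ := peanoBaker.exists_summable_bound hA hτ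
  have hsub : Ι τ t ⊆ Icc a b := uIoc_subset_uIcc.trans (uIcc_subset_Icc hτ ht)
  have htail : HasSum (fun k => peanoBaker A (k + 1) t τ)
      (∫ s in τ..t, A s * peanoBakerSum A s τ) := by
    refine hasSum_integral_of_dominated_convergence (fun k s => ‖A s‖ * c k)
      (fun k => ((hA.mul (peanoBaker.continuousOn hA hτ k)).mono
        (uIcc_subset_Icc hτ ht)).intervalIntegrable.def'.aestronglyMeasurable)
      (fun k => ae_of_all _ fun s hs => ?_) (ae_of_all _ fun s _ => hc.mul_left _) ?_
      (ae_of_all _ fun s hs => ?_)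
    · exact (norm_mul_le _ _).trans (by gcongr; exact hbound k s (hsub hs))
    · simp_rw [tsum_mul_left]
      exact ((hA.norm.mul continuousOn_const).mono (uIcc_subset_Icc hτ ht)).intervalIntegrable
    · exact ((hc.of_norm_bounded fun k => hbound k s (hsub hs)).hasSum).mul_left (A s)
  exact (HasSum.zero_add (f := fun k => peanoBaker A k t τ) htail).tsum_eq

theorem hasDerivWithinAt (hA : ContinuousOn A (Icc a b)) (hτ : τ ∈ Icc a b) {t : ℝ}
    (ht : t ∈ Icc a b) :
    HasDerivWithinAt (fun s => peanoBakerSum A s τ) (A t * peanoBakerSum A t τ) (Icc a b) t :=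
  ((hasDerivWithinAt_integral_Icc (hA.mul (continuousOn hA hτ)) hτ ht).const_add 1).congr
    (fun _ hs => eq_one_add_integral hA hτ hs) (eq_one_add_integral hA hτ ht)

end peanoBakerSum

theorem peanoBaker_sum_is_stateTransition_general {n : ℕ} (T : ℝ)
    (A : ℝ → Matrix (Fin n) (Fin n) ℝ) (hA : ContinuousOn A (Set.Icc 0 T))
    (Φ : ℝ → ℝ → Matrix (Fin n) (Fin n) ℝ)
    (hΦ : ∀ t τ, Φ t τ = ∑' k : ℕ, peanoBaker A k t τ) :
    ∀ τ ∈ Set.Icc (0:ℝ) T,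
      (∀ t ∈ Set.Icc (0:ℝ) T,
        HasDerivWithinAt (fun s => Φ s τ) (A t * Φ t τ) (Set.Icc 0 T) t) ∧
      Φ τ τ = 1 := by
  intro τ hτ
  obtain rfl : Φ = peanoBakerSum A := funext₂ hΦ
  exact ⟨fun t ht => peanoBakerSum.hasDerivWithinAt hA hτ ht, peanoBakerSum.self_eq_one A τ⟩

/-- The sum `Φ(t,τ) = ∑_k Φ_k(t,τ)` of the Peano-Baker series satisfies
`∂/∂t Φ(t,τ) = A(t) Φ(t,τ)` and `Φ(τ,τ) = I`. -/
theorem peanoBaker_sum_is_stateTransition {n : ℕ} (T : ℝ) (hT : 0 < T)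
    (A : ℝ → Matrix (Fin n) (Fin n) ℝ) (hA : ContinuousOn A (Set.Icc 0 T))
    (Φ : ℝ → ℝ → Matrix (Fin n) (Fin n) ℝ)
    (hΦ : ∀ t τ, Φ t τ = ∑' k : ℕ, peanoBaker A k t τ) :
    ∀ τ ∈ Set.Icc (0:ℝ) T,
      (∀ t ∈ Set.Icc (0:ℝ) T,
        HasDerivWithinAt (fun s => Φ s τ) (A t * Φ t τ) (Set.Icc 0 T) t) ∧
      Φ τ τ = 1 :=
  peanoBaker_sum_is_stateTransition_general T A hA Φ hΦ
end
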